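/- The behavioural pseudometric d₁ is the greatest fixed point of Δ: Δ(d₁) = d₁, and every 1-bounded pseudometric d with Δ(d)(s₁,s₂) ≤ d(s₁,s₂) for all s₁,s₂ satisfies d₁(s₁,s₂) ≤ d(s₁,s₂) for all s₁,s₂. -/
import Mathlib


open scoped Classical
open Finset

/-- A probabilistic transition system on a finite state set `S`:
`prob s s'` is the probability of a transition from `s` to `s'`;
each row sums to `0` or `1`. -/
structure PTS (S : Type) [Fintype S] where
  prob : S → S → ℝ
  nonneg : ∀ s s', 0 ≤ prob s s'
  le_one : ∀ s s', prob s s' ≤ 1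
  sum01 : ∀ s, (∑ s', prob s s') = 0 ∨ (∑ s', prob s s') = 1

/-- The logic `L`: `true`, diamond, conjunction, negation and `φ ⊖ q` with `q ∈ [0,1] ∩ ℚ`. -/
inductive Formula : Type where
  | tt : Formula
  | diam : Formula → Formula
  | conj : Formula → Formula → Formula
  | neg : Formula → Formula
  | sub : Formula → {q : ℚ // 0 ≤ q ∧ q ≤ 1} → Formula

variable {S : Type} [Fintype S]

/-- The real-valued interpretation `⟦φ⟧_δ` of a formula. -/
noncomputable def interp (M : PTS S) (δ : ℝ) : Formula → S → ℝ
  | .tt, _ => 1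
  | .diam φ, s => δ * ∑ s', M.prob s s' * interp M δ φ s'
  | .conj φ ψ, s => min (interp M δ φ s) (interp M δ ψ s)
  | .neg φ, s => 1 - interp M δ φ s
  | .sub φ q, s => max (interp M δ φ s - ((q : ℚ) : ℝ)) 0

/-- The behavioural distance `d_δ(s₁,s₂) = sup_{φ ∈ L} ⟦φ⟧_δ(s₁) − ⟦φ⟧_δ(s₂)`. -/
noncomputable def pdist (M : PTS S) (δ : ℝ) (s₁ s₂ : S) : ℝ :=
  ⨆ φ : Formula, (interp M δ φ s₁ - interp M δ φ s₂)

/-- `d` is a 1-bounded pseudometric on `S`. -/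
def IsPseudo (d : S → S → ℝ) : Prop :=
  (∀ s₁ s₂, 0 ≤ d s₁ s₂ ∧ d s₁ s₂ ≤ 1) ∧ (∀ s, d s s = 0) ∧
  (∀ s₁ s₂, d s₁ s₂ = d s₂ s₁) ∧ (∀ s₁ s₂ s₃, d s₁ s₃ ≤ d s₁ s₂ + d s₂ s₃)

/-- The order `⊑` on 1-bounded pseudometrics: `d₁ ⊑ d₂` iff `d₁ ≥ d₂` pointwise. -/
def ple (d₁ d₂ : S → S → ℝ) : Prop := ∀ s₁ s₂, d₂ s₁ s₂ ≤ d₁ s₁ s₂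

/-- `f : S → [0,1]` is nonexpansive with respect to `d`. -/
def Nonexp (d : S → S → ℝ) (f : S → ℝ) : Prop :=
  (∀ s, 0 ≤ f s ∧ f s ≤ 1) ∧ ∀ s₁ s₂, |f s₁ - f s₂| ≤ d s₁ s₂

/-- The functional `Δ` on 1-bounded pseudometrics. -/
noncomputable def Delta (M : PTS S) (d : S → S → ℝ) (s₁ s₂ : S) : ℝ :=
  if (∑ s, M.prob s₁ s) = 1 ∧ (∑ s, M.prob s₂ s) = 1 then
    sSup {x : ℝ | ∃ f : S → ℝ, Nonexp d f ∧ x = ∑ s, f s * (M.prob s₁ s - M.prob s₂ s)}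
  else if (∑ s, M.prob s₁ s) = 0 ∧ (∑ s, M.prob s₂ s) = 0 then 0
  else 1

/-- `R` is a probabilistic bisimulation on `M`. -/
def IsBisim (M : PTS S) (R : S → S → Prop) : Prop :=
  Equivalence R ∧ ∀ s₁ s₂, R s₁ s₂ → ∀ e : S,
    (∑ s, if R e s then M.prob s₁ s else 0) = (∑ s, if R e s then M.prob s₂ s else 0)

/-- `s₁` and `s₂` are probabilistic bisimilar. -/
def Bisimilar (M : PTS S) (s₁ s₂ : S) : Prop := ∃ R, IsBisim M R ∧ R s₁ s₂

/-- The modal depth of a formula. -/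
def Formula.depth : Formula → ℕ
  | .tt => 0
  | .diam φ => φ.depth + 1
  | .conj φ ψ => max φ.depth ψ.depth
  | .neg φ => φ.depth
  | .sub φ _ => φ.depth

/-- The ratio `ρ(d₁,d₂) = min { d₂(s₁,s₂)/d₁(s₁,s₂) | d₂(s₁,s₂) > 0 }`,
with the minimum of the empty set taken to be `1`. -/
noncomputable def rho (d₁ d₂ : S → S → ℝ) : ℝ :=
  if {x : ℝ | ∃ s₁ s₂, 0 < d₂ s₁ s₂ ∧ x = d₂ s₁ s₂ / d₁ s₁ s₂}.Nonempty
  then sInf {x : ℝ | ∃ s₁ s₂, 0 < d₂ s₁ s₂ ∧ x = d₂ s₁ s₂ / d₁ s₁ s₂} else 1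

/-- `μ = min { d(s₁,s₂) | d(s₁,s₂) > 0 }`, with the minimum of the empty set taken to be `1`. -/
noncomputable def muMin (d : S → S → ℝ) : ℝ :=
  if {x : ℝ | ∃ s₁ s₂, 0 < d s₁ s₂ ∧ x = d s₁ s₂}.Nonempty
  then sInf {x : ℝ | ∃ s₁ s₂, 0 < d s₁ s₂ ∧ x = d s₁ s₂} else 1

/-- The iterates `d⁰ = ⊤`, `d^{n+1} = Δ(d^n)`. -/
noncomputable def iterd (M : PTS S) : ℕ → S → S → ℝ
  | 0 => fun _ _ => 0
  | n + 1 => Delta M (iterd M n)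

/-- The termination probabilities `τₙ`. -/
noncomputable def term (M : PTS S) : ℕ → S → ℝ
  | 0, _ => 0
  | n + 1, s => if (∑ s', M.prob s s') = 0 then 1 else ∑ s', M.prob s s' * term M n s'

/-! ### Auxiliary lemmas -/

instance : Nonempty Formula := ⟨.tt⟩

section Aux

variable {S : Type} [Fintype S] (M : PTS S)

lemma interp_mem (φ : Formula) (s : S) : 0 ≤ interp M 1 φ s ∧ interp M 1 φ s ≤ 1 := by
  induction φ generalizing s with
  | tt => simp [interp]
  | diam φ ih =>
      simp only [interp, one_mul]
      refine ⟨Finset.sum_nonneg fun s' _ => mul_nonneg (M.nonneg s s') (ih s').1, ?_⟩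
      calc ∑ s', M.prob s s' * interp M 1 φ s' ≤ ∑ s', M.prob s s' * 1 :=
            Finset.sum_le_sum fun s' _ => mul_le_mul_of_nonneg_left (ih s').2 (M.nonneg s s')
        _ ≤ 1 := by
            rcases M.sum01 s with h | h <;> simp [h]
  | conj φ ψ ihφ ihψ =>
      simp only [interp]
      exact ⟨le_min (ihφ s).1 (ihψ s).1, min_le_of_left_le (ihφ s).2⟩
  | neg φ ih =>
      simp only [interp]
      constructor <;> linarith [(ih s).1, (ih s).2]
  | sub φ q ih =>
      simp only [interp]
      have hq0 : (0:ℝ) ≤ ((q : ℚ) : ℝ) := by exact_mod_cast q.2.1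
      constructor
      · exact le_max_right _ _
      · exact max_le (by linarith [(ih s).2]) zero_le_one

lemma pdist_bdd (s₁ s₂ : S) :
    BddAbove (Set.range fun φ => interp M 1 φ s₁ - interp M 1 φ s₂) := by
  refine ⟨1, ?_⟩
  rintro x ⟨φ, rfl⟩
  dsimp only
  linarith [(interp_mem M φ s₁).2, (interp_mem M φ s₂).1]

lemma diff_le_pdist (φ : Formula) (s₁ s₂ : S) :
    interp M 1 φ s₁ - interp M 1 φ s₂ ≤ pdist M 1 s₁ s₂ :=
  le_ciSup (pdist_bdd M s₁ s₂) φ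

lemma pdist_nonneg (s₁ s₂ : S) : 0 ≤ pdist M 1 s₁ s₂ := by
  have := diff_le_pdist M .tt s₁ s₂
  simpa [interp] using this

lemma abs_diff_le_pdist (φ : Formula) (s₁ s₂ : S) :
    |interp M 1 φ s₁ - interp M 1 φ s₂| ≤ pdist M 1 s₁ s₂ := by
  rw [abs_le]
  refine ⟨?_, diff_le_pdist M φ s₁ s₂⟩
  have := diff_le_pdist M (.neg φ) s₁ s₂
  simp only [interp] at this
  linarith

lemma interp_nonexp (φ : Formula) : Nonexp (pdist M 1) (interp M 1 φ) :=
  ⟨fun s => interp_mem M φ s, fun s₁ s₂ => abs_diff_le_pdist M φ s₁ s₂⟩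

lemma dset_bdd (d : S → S → ℝ) (s₁ s₂ : S) :
    ∀ x ∈ {x : ℝ | ∃ f : S → ℝ, Nonexp d f ∧ x = ∑ s, f s * (M.prob s₁ s - M.prob s₂ s)},
      x ≤ 1 := by
  rintro x ⟨f, hf, rfl⟩
  calc ∑ s, f s * (M.prob s₁ s - M.prob s₂ s) ≤ ∑ s, M.prob s₁ s := by
        refine Finset.sum_le_sum fun s _ => ?_
        have h1 := (hf.1 s).1; have h2 := (hf.1 s).2
        have h3 := M.nonneg s₁ s; have h4 := M.nonneg s₂ s
        nlinarith
    _ ≤ 1 := by rcases M.sum01 s₁ with h | h <;> simp [h]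

lemma dset_bddAbove (d : S → S → ℝ) (s₁ s₂ : S) :
    BddAbove {x : ℝ | ∃ f : S → ℝ, Nonexp d f ∧ x = ∑ s, f s * (M.prob s₁ s - M.prob s₂ s)} :=
  ⟨1, fun x hx => dset_bdd M d s₁ s₂ x hx⟩

lemma mem_le_delta (d : S → S → ℝ) (s₁ s₂ : S)
    (h1 : (∑ s, M.prob s₁ s) = 1) (h2 : (∑ s, M.prob s₂ s) = 1)
    {f : S → ℝ} (hf : Nonexp d f) :
    ∑ s, f s * (M.prob s₁ s - M.prob s₂ s) ≤ Delta M d s₁ s₂ := by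
  rw [Delta, if_pos ⟨h1, h2⟩]
  exact le_csSup (dset_bddAbove M d s₁ s₂) ⟨f, hf, rfl⟩

lemma neg_mem_le_delta (d : S → S → ℝ) (s₁ s₂ : S)
    (h1 : (∑ s, M.prob s₁ s) = 1) (h2 : (∑ s, M.prob s₂ s) = 1)
    {f : S → ℝ} (hf : Nonexp d f) :
    -∑ s, f s * (M.prob s₁ s - M.prob s₂ s) ≤ Delta M d s₁ s₂ := by
  have hf' : Nonexp d (fun s => 1 - f s) := by
    refine ⟨fun s => ⟨?_, ?_⟩, fun a b => ?_⟩
    · show (0:ℝ) ≤ 1 - f s; linarith [(hf.1 s).2]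
    · show (1:ℝ) - f s ≤ 1; linarith [(hf.1 s).1]
    · show |(1 - f a) - (1 - f b)| ≤ d a b
      have := hf.2 a b
      rw [show (1 - f a) - (1 - f b) = -(f a - f b) by ring, abs_neg]
      exact this
  have key : ∑ s, (1 - f s) * (M.prob s₁ s - M.prob s₂ s)
      = (∑ s, M.prob s₁ s) - (∑ s, M.prob s₂ s)
        - ∑ s, f s * (M.prob s₁ s - M.prob s₂ s) := by
    rw [← Finset.sum_sub_distrib, ← Finset.sum_sub_distrib]
    exact Finset.sum_congr rfl fun s _ => by ring
  have := mem_le_delta M d s₁ s₂ h1 h2 hf'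
  rw [key, h1, h2] at this
  linarith

lemma delta_nonneg (d : S → S → ℝ) (hd : ∀ a b, 0 ≤ d a b) (s₁ s₂ : S) :
    0 ≤ Delta M d s₁ s₂ := by
  rw [Delta]
  split_ifs with h h'
  · refine le_csSup (dset_bddAbove M d s₁ s₂) ?_
    exact ⟨fun _ => 0, ⟨fun s => ⟨le_refl _, zero_le_one⟩, fun a b => by simpa using hd a b⟩,
      by simp⟩
  · exact le_refl 0
  · exact zero_le_one

lemma diam_diff (φ : Formula) (s₁ s₂ : S) :
    interp M 1 (.diam φ) s₁ - interp M 1 (.diam φ) s₂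
      = ∑ s, interp M 1 φ s * (M.prob s₁ s - M.prob s₂ s) := by
  simp only [interp, one_mul]
  rw [← Finset.sum_sub_distrib]
  exact Finset.sum_congr rfl fun s _ => by ring

lemma diam_zero (φ : Formula) (s : S) (h : (∑ s', M.prob s s') = 0) :
    interp M 1 (.diam φ) s = 0 := by
  simp only [interp, one_mul]
  have hz : ∀ s' ∈ (Finset.univ : Finset S), M.prob s s' = 0 :=
    (Finset.sum_eq_zero_iff_of_nonneg (fun s' _ => M.nonneg s s')).1 h
  exact Finset.sum_eq_zero fun s' _ => by rw [hz s' (Finset.mem_univ s')]; ring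

/-- Generic structural induction: if `D` is nonnegative, equals at least `1` on "mixed"
pairs, and dominates the diamond differences, then every formula is `D`-nonexpansive. -/
lemma abs_diff_le_gen (D : S → S → ℝ) (hD0 : ∀ a b, 0 ≤ D a b)
    (hmix : ∀ a b, ¬((∑ s, M.prob a s) = 1 ∧ (∑ s, M.prob b s) = 1) →
      ¬((∑ s, M.prob a s) = 0 ∧ (∑ s, M.prob b s) = 0) → 1 ≤ D a b)
    (hdiam : ∀ (φ : Formula) (a b : S), (∑ s, M.prob a s) = 1 → (∑ s, M.prob b s) = 1 →
      (∀ x y, |interp M 1 φ x - interp M 1 φ y| ≤ D x y) →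
      |∑ s, interp M 1 φ s * (M.prob a s - M.prob b s)| ≤ D a b) :
    ∀ (φ : Formula) (s₁ s₂ : S), |interp M 1 φ s₁ - interp M 1 φ s₂| ≤ D s₁ s₂ := by
  intro φ
  induction φ with
  | tt => intro s₁ s₂; simpa [interp] using hD0 s₁ s₂
  | diam φ ih =>
      intro s₁ s₂
      rcases M.sum01 s₁ with h1 | h1 <;> rcases M.sum01 s₂ with h2 | h2
      · rw [diam_zero M φ s₁ h1, diam_zero M φ s₂ h2]
        simpa using hD0 s₁ s₂
      · have hD := hmix s₁ s₂ (by rintro ⟨ha, _⟩; rw [h1] at ha; norm_num at ha)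
          (by rintro ⟨_, hb⟩; rw [h2] at hb; norm_num at hb)
        have m1 := interp_mem M (.diam φ) s₁
        have m2 := interp_mem M (.diam φ) s₂
        rw [abs_le]; constructor <;> linarith [m1.1, m1.2, m2.1, m2.2]
      · have hD := hmix s₁ s₂ (by rintro ⟨_, hb⟩; rw [h2] at hb; norm_num at hb)
          (by rintro ⟨ha, _⟩; rw [h1] at ha; norm_num at ha)
        have m1 := interp_mem M (.diam φ) s₁
        have m2 := interp_mem M (.diam φ) s₂
        rw [abs_le]; constructor <;> linarith [m1.1, m1.2, m2.1, m2.2]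
      · rw [diam_diff]
        exact hdiam φ s₁ s₂ h1 h2 ih
  | conj φ ψ ihφ ihψ =>
      intro s₁ s₂
      have hφ := abs_le.1 (ihφ s₁ s₂)
      have hψ := abs_le.1 (ihψ s₁ s₂)
      simp only [interp]
      rw [abs_le]
      rcases min_cases (interp M 1 φ s₁) (interp M 1 ψ s₁) with ⟨e1, he1⟩ | ⟨e1, he1⟩ <;>
        rcases min_cases (interp M 1 φ s₂) (interp M 1 ψ s₂) with ⟨e2, he2⟩ | ⟨e2, he2⟩ <;>
        rw [e1, e2] <;> exact ⟨by linarith [hφ.1, hφ.2, hψ.1, hψ.2],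
          by linarith [hφ.1, hφ.2, hψ.1, hψ.2]⟩
  | neg φ ih =>
      intro s₁ s₂
      have h := abs_le.1 (ih s₁ s₂)
      simp only [interp]
      rw [abs_le]
      exact ⟨by linarith [h.1, h.2], by linarith [h.1, h.2]⟩
  | sub φ q ih =>
      intro s₁ s₂
      have h := abs_le.1 (ih s₁ s₂)
      have hD := le_trans (abs_nonneg _) (ih s₁ s₂)
      simp only [interp]
      rw [abs_le]
      rcases max_cases (interp M 1 φ s₁ - ((q : ℚ) : ℝ)) 0 with ⟨e1, he1⟩ | ⟨e1, he1⟩ <;>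
        rcases max_cases (interp M 1 φ s₂ - ((q : ℚ) : ℝ)) 0 with ⟨e2, he2⟩ | ⟨e2, he2⟩ <;>
        rw [e1, e2] <;> exact ⟨by linarith [h.1, h.2], by linarith [h.1, h.2]⟩

lemma part2core (d : S → S → ℝ) (hp : IsPseudo d)
    (hΔ : ∀ s₁ s₂, Delta M d s₁ s₂ ≤ d s₁ s₂) :
    ∀ (φ : Formula) (s₁ s₂ : S), |interp M 1 φ s₁ - interp M 1 φ s₂| ≤ d s₁ s₂ := by
  refine abs_diff_le_gen M d (fun a b => (hp.1 a b).1) ?_ ?_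
  · intro a b hn1 hn0
    have := hΔ a b
    rw [Delta, if_neg hn1, if_neg hn0] at this
    exact this
  · intro φ a b h1 h2 ihφ
    have hf : Nonexp d (interp M 1 φ) := ⟨fun s => interp_mem M φ s, ihφ⟩
    rw [abs_le]
    exact ⟨by linarith [neg_mem_le_delta M d a b h1 h2 hf, hΔ a b],
      le_trans (mem_le_delta M d a b h1 h2 hf) (hΔ a b)⟩

lemma part1_le :
    ∀ (φ : Formula) (s₁ s₂ : S),
      |interp M 1 φ s₁ - interp M 1 φ s₂| ≤ Delta M (pdist M 1) s₁ s₂ := by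
  refine abs_diff_le_gen M _ (fun a b => delta_nonneg M _ (pdist_nonneg M) a b) ?_ ?_
  · intro a b hn1 hn0
    rw [Delta, if_neg hn1, if_neg hn0]
  · intro φ a b h1 h2 _
    have hf := interp_nonexp M φ
    rw [abs_le]
    exact ⟨by linarith [neg_mem_le_delta M (pdist M 1) a b h1 h2 hf],
      mem_le_delta M (pdist M 1) a b h1 h2 hf⟩

end Aux

section Density

variable {S : Type} [Fintype S] (M : PTS S)

lemma exists_rat_near' (x ε : ℝ) (h0 : 0 ≤ x) (h1 : x ≤ 1) (hε : 0 < ε) :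
    ∃ q : ℚ, (0 ≤ q ∧ q ≤ 1) ∧ x ≤ (q : ℝ) ∧ (q : ℝ) ≤ x + ε := by
  rcases eq_or_lt_of_le h1 with h | hx
  · exact ⟨1, ⟨zero_le_one, le_refl 1⟩, by rw [h]; norm_num, by rw [h]; push_cast; linarith⟩
  · obtain ⟨q, hq1, hq2⟩ := exists_rat_btwn (show x < min (x + ε) 1 from lt_min (by linarith) hx)
    have hqε : (q : ℝ) ≤ x + ε := le_trans (le_of_lt hq2) (min_le_left _ _)
    have hq1' : (q : ℝ) ≤ 1 := le_trans (le_of_lt hq2) (min_le_right _ _)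
    have hq0 : (0 : ℝ) ≤ (q : ℝ) := le_of_lt (lt_of_le_of_lt h0 hq1)
    exact ⟨q, ⟨by exact_mod_cast hq0, by exact_mod_cast hq1'⟩, le_of_lt hq1, hqε⟩

lemma pair_approx (f : S → ℝ) (hf : Nonexp (pdist M 1) f) {ε : ℝ} (hε : 0 < ε) (s t : S) :
    ∃ ψ : Formula, f s - ε ≤ interp M 1 ψ s ∧ interp M 1 ψ t ≤ f t + ε := by
  have hlt : pdist M 1 s t - ε / 2 < pdist M 1 s t := by linarith
  obtain ⟨φ, hφ⟩ := exists_lt_of_lt_ciSup (show pdist M 1 s t - ε / 2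
    < ⨆ φ : Formula, (interp M 1 φ s - interp M 1 φ t) from hlt)
  set a := interp M 1 φ s with ha
  set b := interp M 1 φ t with hb
  have hfd : f s - f t ≤ pdist M 1 s t :=
    le_trans (le_abs_self _) (hf.2 s t)
  have hab : f s - f t - ε / 2 ≤ a - b := by linarith
  obtain ⟨q, hq01, hqb, hqb'⟩ :=
    exists_rat_near' b (ε / 2) (interp_mem M φ t).1 (interp_mem M φ t).2 (by linarith)
  obtain ⟨r, hr01, hrt, hrt'⟩ :=
    exists_rat_near' (f t) (ε / 2) (hf.1 t).1 (hf.1 t).2 (by linarith)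
  refine ⟨.neg (.sub (.neg (.sub φ ⟨q, hq01⟩)) ⟨r, hr01⟩), ?_, ?_⟩
  · -- at s : f s - ε ≤ 1 - max (1 - max (a - q) 0 - r) 0
    simp only [interp]
    have hr1 : ((r : ℚ) : ℝ) ≤ 1 := by exact_mod_cast hr01.2
    have key : f s - ε ≤ a - ((q : ℚ) : ℝ) + ((r : ℚ) : ℝ) := by
      linarith
    have h2 : a - ((q : ℚ) : ℝ) ≤ max (a - ((q : ℚ) : ℝ)) 0 := le_max_left _ _
    have hfs1 := (hf.1 s).2
    rcases max_cases (1 - max (a - ((q : ℚ) : ℝ)) 0 - ((r : ℚ) : ℝ)) 0 with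
      ⟨e, he⟩ | ⟨e, he⟩ <;> rw [e] <;> linarith
  · -- at t : 1 - max (1 - max (b - q) 0 - r) 0 ≤ f t + ε
    simp only [interp]
    have h1 : max (b - ((q : ℚ) : ℝ)) 0 = 0 := max_eq_right (by linarith)
    rw [h1]
    have hr1 : ((r : ℚ) : ℝ) ≤ 1 := by exact_mod_cast hr01.2
    have h2 : max (1 - 0 - ((r : ℚ) : ℝ)) 0 = 1 - 0 - ((r : ℚ) : ℝ) :=
      max_eq_left (by linarith)
    rw [h2]
    linarith

lemma list_min (f : S → ℝ) (hf : Nonexp (pdist M 1) f) {ε : ℝ} (hε : 0 < ε) (s : S) :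
    ∀ l : List S, ∃ χ : Formula,
      f s - ε ≤ interp M 1 χ s ∧ ∀ u ∈ l, interp M 1 χ u ≤ f u + ε := by
  intro l
  induction l with
  | nil =>
      obtain ⟨ψ, h1, _⟩ := pair_approx M f hf hε s s
      exact ⟨ψ, h1, by simp⟩
  | cons t l ih =>
      obtain ⟨χ, hχ1, hχ2⟩ := ih
      obtain ⟨ψ, hψ1, hψ2⟩ := pair_approx M f hf hε s t
      refine ⟨.conj χ ψ, ?_, ?_⟩
      · simp only [interp]
        exact le_min hχ1 hψ1
      · intro u hu
        rcases List.mem_cons.1 hu with rfl | hu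
        · simp only [interp]
          exact le_trans (min_le_right _ _) hψ2
        · simp only [interp]
          exact le_trans (min_le_left _ _) (hχ2 u hu)

lemma point_approx (f : S → ℝ) (hf : Nonexp (pdist M 1) f) {ε : ℝ} (hε : 0 < ε) (s : S) :
    ∃ χ : Formula, f s - ε ≤ interp M 1 χ s ∧ ∀ u, interp M 1 χ u ≤ f u + ε := by
  obtain ⟨χ, h1, h2⟩ := list_min M f hf hε s Finset.univ.toList
  exact ⟨χ, h1, fun u => h2 u ((Finset.mem_toList).2 (Finset.mem_univ u))⟩

lemma one_sub_min (A B : ℝ) : 1 - min (1 - A) (1 - B) = max A B := by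
  rcases le_total A B with h | h
  · rw [min_eq_right (by linarith), max_eq_right h]; ring
  · rw [min_eq_left (by linarith), max_eq_left h]; ring

lemma list_max (f : S → ℝ) (hf : Nonexp (pdist M 1) f) {ε : ℝ} (hε : 0 < ε) :
    ∀ l : List S, ∃ Φ : Formula,
      (∀ u, interp M 1 Φ u ≤ f u + ε) ∧ ∀ u ∈ l, f u - ε ≤ interp M 1 Φ u := by
  intro l
  induction l with
  | nil =>
      refine ⟨.sub .tt ⟨1, by norm_num⟩, fun u => ?_, by simp⟩
      simp only [interp]
      have := (hf.1 u).1
      rw [show ((((⟨1, by norm_num⟩ : {q : ℚ // 0 ≤ q ∧ q ≤ 1}) : ℚ)) : ℝ) = 1 by norm_num]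
      rw [show (1 : ℝ) - 1 = 0 by ring, max_self]
      linarith
  | cons s l ih =>
      obtain ⟨Φ, hΦ1, hΦ2⟩ := ih
      obtain ⟨χ, hχ1, hχ2⟩ := point_approx M f hf hε s
      refine ⟨.neg (.conj (.neg Φ) (.neg χ)), fun u => ?_, fun u hu => ?_⟩
      · simp only [interp, one_sub_min]
        exact max_le (hΦ1 u) (hχ2 u)
      · simp only [interp, one_sub_min]
        rcases List.mem_cons.1 hu with rfl | hu
        · exact le_trans hχ1 (le_max_right _ _)
        · exact le_trans (hΦ2 u hu) (le_max_left _ _)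

lemma density (f : S → ℝ) (hf : Nonexp (pdist M 1) f) {ε : ℝ} (hε : 0 < ε) :
    ∃ Φ : Formula, ∀ u, |interp M 1 Φ u - f u| ≤ ε := by
  obtain ⟨Φ, h1, h2⟩ := list_max M f hf hε Finset.univ.toList
  refine ⟨Φ, fun u => ?_⟩
  rw [abs_le]
  have := h2 u ((Finset.mem_toList).2 (Finset.mem_univ u))
  exact ⟨by linarith, by linarith [h1 u]⟩

lemma delta_pdist_le (s₁ s₂ : S) : Delta M (pdist M 1) s₁ s₂ ≤ pdist M 1 s₁ s₂ := by
  rw [Delta]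
  split_ifs with h h'
  · apply Real.sSup_le _ (pdist_nonneg M s₁ s₂)
    rintro x ⟨f, hf, rfl⟩
    refine le_of_forall_pos_le_add ?_
    intro ε hε
    obtain ⟨Φ, hΦ⟩ := density M f hf (show (0:ℝ) < ε / 2 by linarith)
    have split : ∑ s, f s * (M.prob s₁ s - M.prob s₂ s)
        = (∑ s, (f s - interp M 1 Φ s) * (M.prob s₁ s - M.prob s₂ s))
          + ∑ s, interp M 1 Φ s * (M.prob s₁ s - M.prob s₂ s) := by
      rw [← Finset.sum_add_distrib]
      exact Finset.sum_congr rfl fun s _ => by ring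
    have hA : ∑ s, (f s - interp M 1 Φ s) * (M.prob s₁ s - M.prob s₂ s)
        ≤ ∑ s, (ε / 2) * (M.prob s₁ s + M.prob s₂ s) := by
      refine Finset.sum_le_sum fun s _ => ?_
      have h1 := abs_le.1 (hΦ s)
      have h3 := M.nonneg s₁ s; have h4 := M.nonneg s₂ s
      nlinarith [h1.1, h1.2]
    have hA2 : ∑ s, (ε / 2) * (M.prob s₁ s + M.prob s₂ s) = ε := by
      rw [← Finset.mul_sum, Finset.sum_add_distrib, h.1, h.2]
      ring
    have hB : ∑ s, interp M 1 Φ s * (M.prob s₁ s - M.prob s₂ s) ≤ pdist M 1 s₁ s₂ := by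
      rw [← diam_diff]
      exact diff_le_pdist M (.diam Φ) s₁ s₂
    rw [split]
    linarith
  · exact pdist_nonneg M s₁ s₂
  · rcases M.sum01 s₁ with h1 | h1 <;> rcases M.sum01 s₂ with h2 | h2
    · exact absurd ⟨h1, h2⟩ h'
    · have hd : interp M 1 (.neg (.diam .tt)) s₁ - interp M 1 (.neg (.diam .tt)) s₂ = 1 := by
        simp only [interp, mul_one, one_mul]
        rw [h1, h2]; ring
      have := diff_le_pdist M (.neg (.diam .tt)) s₁ s₂
      rw [hd] at this
      exact this
    · have hd : interp M 1 (.diam .tt) s₁ - interp M 1 (.diam .tt) s₂ = 1 := by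
        simp only [interp, mul_one, one_mul]
        rw [h1, h2]; ring
      have := diff_le_pdist M (.diam .tt) s₁ s₂
      rw [hd] at this
      exact this
    · exact absurd ⟨h1, h2⟩ h

end Density


/-- `d₁` is the greatest fixed point of `Δ`: `Δ(d₁) = d₁`, and every
1-bounded pseudometric `d` that is a post-fixed point of `Δ` satisfies `d₁ ≤ d`
pointwise. -/
theorem stmt10 (S : Type) [Fintype S] (M : PTS S) :
    Delta M (pdist M 1) = pdist M 1 ∧
    ∀ d : S → S → ℝ, IsPseudo d → (∀ s₁ s₂, Delta M d s₁ s₂ ≤ d s₁ s₂) →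
      ∀ s₁ s₂, pdist M 1 s₁ s₂ ≤ d s₁ s₂ := by
  constructor
  · funext s₁ s₂
    refine le_antisymm (delta_pdist_le M s₁ s₂) ?_
    exact ciSup_le fun φ => le_trans (le_abs_self _) (part1_le M φ s₁ s₂)
  · intro d hp hΔ s₁ s₂
    exact ciSup_le fun φ => le_trans (le_abs_self _) (part2core M d hp hΔ φ s₁ s₂)
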